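/- arXiv:2505.15432 — 12 statements merged into one kernel-verified Lean document; each statement's English description precedes it below -/
import Mathlib

section
/- If ℓ1 and ℓ2 are Lyndon words over a linearly ordered alphabet with ℓ1 lexicographically smaller than ℓ2, then the concatenation ℓ1ℓ2 is also a Lyndon word, and consequently ℓ1ℓ2 is lexicographically smaller than ℓ2ℓ1. -/
/- Words over a linearly ordered alphabet `I` are lists, compared by the
lexicographic order of Lean's `LinearOrder (List I)` instance, in which a word
is smaller than any word of which it is a proper prefix. -/

variable {I : Type*} [LinearOrder I]

/-- A nonempty word is *Lyndon* if it is lexicographically smaller than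
every proper nonempty suffix of itself. -/
def IsLyndon (w : List I) : Prop :=
  w ≠ [] ∧ ∀ i, 0 < i → i < w.length → w < w.drop i

/-- `r` is the longest proper suffix of `l` that is Lyndon
(the right factor `l^r` of the costandard factorization). -/
def LongestLyndonSuffix (l r : List I) : Prop :=
  r <:+ l ∧ r.length < l.length ∧ IsLyndon r ∧
    ∀ r', r' <:+ l → r'.length < l.length → IsLyndon r' → r'.length ≤ r.length

/-- `p` is the longest proper prefix of `l` that is Lyndon
(the left factor `l^{ls}` of the standard factorization). -/
def LongestLyndonPrefix (l p : List I) : Prop :=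
  p <+: l ∧ p.length < l.length ∧ IsLyndon p ∧
    ∀ p', p' <+: l → p'.length < l.length → IsLyndon p' → p'.length ≤ p.length

/-- `fs` is the canonical factorization of `w`: a nonempty, lexicographically
nonincreasing list of Lyndon words whose concatenation is `w`. -/
def IsCanonicalFactorization (w : List I) (fs : List (List I)) : Prop :=
  w = fs.flatten ∧ fs ≠ [] ∧ (∀ f ∈ fs, IsLyndon f) ∧ fs.Chain' (· ≥ ·)
private lemma lex_iff {l m : List I} : l < m ↔ List.Lex (· < ·) l m :=
  Iff.rfl

private lemma lex_append_left {l m : List I} (c : List I)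
    (h : List.Lex (· < ·) l m) : List.Lex (· < ·) (c ++ l) (c ++ m) := by
  induction c with
  | nil => exact h
  | cons a c ih => exact List.Lex.cons ih

private lemma lex_of_prefix {l m : List I} (h : l <+: m) (hne : l ≠ m) :
    List.Lex (· < ·) l m := by
  induction l generalizing m with
  | nil =>
    cases m with
    | nil => exact absurd rfl hne
    | cons b t => exact List.Lex.nil
  | cons a l ih =>
    obtain ⟨t, rfl⟩ := h
    exact List.Lex.cons (ih (l.prefix_append t) (fun h => hne (congrArg (a :: ·) h)))

private lemma lex_append_of_lex {l m : List I} (h : List.Lex (· < ·) l m) :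
    l <+: m ∨ ∀ w w' : List I, List.Lex (· < ·) (l ++ w) (m ++ w') := by
  induction h with
  | nil => exact Or.inl (List.nil_prefix)
  | rel hab => exact Or.inr fun w w' => List.Lex.rel hab
  | @cons a l m h ih =>
    rcases ih with hp | hl
    · exact Or.inl (List.prefix_cons_inj a |>.mpr hp)
    · exact Or.inr fun w w' => List.Lex.cons (hl w w')

/-- If `ℓ1` and `ℓ2` are Lyndon words with `ℓ1 < ℓ2` lexicographically, then the
concatenation `ℓ1 ++ ℓ2` is Lyndon, and consequently `ℓ1 ++ ℓ2 < ℓ2 ++ ℓ1`. -/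
theorem lyndon_append_of_lt (ℓ1 ℓ2 : List I)
    (h1 : IsLyndon ℓ1) (h2 : IsLyndon ℓ2) (hlt : ℓ1 < ℓ2) :
    IsLyndon (ℓ1 ++ ℓ2) ∧ ℓ1 ++ ℓ2 < ℓ2 ++ ℓ1 := by
  obtain ⟨hne1, hsuf1⟩ := h1
  obtain ⟨hne2, hsuf2⟩ := h2
  have hn1 : 0 < ℓ1.length := List.length_pos_iff.mpr hne1
  -- key: ℓ1 ++ ℓ2 < ℓ2
  have hv : ℓ1 ++ ℓ2 < ℓ2 := by
    rw [lex_iff] at hlt ⊢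
    rcases lex_append_of_lex hlt with hp | hl
    · obtain ⟨t, rfl⟩ := hp
      have htne : 0 < ℓ1.length ∧ ℓ1.length < (ℓ1 ++ t).length := by
        constructor
        · exact hn1
        · have : t ≠ [] := by rintro rfl; simp at hlt
          simp [List.length_pos_iff.mpr this]
      have := hsuf2 ℓ1.length htne.1 htne.2
      rw [lex_iff] at this
      simpa using lex_append_left ℓ1 this
    · simpa using hl ℓ2 []
  have hLyn : IsLyndon (ℓ1 ++ ℓ2) := by
    refine ⟨by simp [hne1], fun i hi hilt => ?_⟩
    rcases lt_trichotomy i ℓ1.length with h | h | h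
    · rw [List.drop_append_of_le_length h.le]
      have hl1 := hsuf1 i hi h
      rw [lex_iff] at hl1 ⊢
      rcases lex_append_of_lex hl1 with hp | hl
      · have := hp.length_le
        simp at this
        omega
      · exact hl ℓ2 ℓ2
    · subst h; simpa using hv
    · have : (ℓ1 ++ ℓ2).drop i = ℓ2.drop (i - ℓ1.length) := by
        rw [List.drop_append]
        have : ℓ1.drop i = [] := List.drop_eq_nil_of_le h.le
        simp [this]
      rw [this]
      have h2' := hsuf2 (i - ℓ1.length) (by omega)
        (by simp at hilt; omega)
      exact hv.trans h2'
  refine ⟨hLyn, hv.trans ?_⟩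
  rw [lex_iff]
  exact lex_of_prefix (ℓ2.prefix_append ℓ1) (by simp [hne1])
end

section
/- Let ℓ be a Lyndon word and let w be a word with canonical factorization w = ℓ1 ℓ2 ... ℓk (k ≥ 1, each ℓi Lyndon, ℓ1 ≥ ℓ2 ≥ ... ≥ ℓk). Then ℓ > w if and only if ℓ > ℓ1. -/
/- Words over a linearly ordered alphabet `I` are lists, compared by the
lexicographic order of Lean's `LinearOrder (List I)` instance, in which a word
is smaller than any word of which it is a proper prefix. -/

variable {I : Type*} [LinearOrder I]

/-! If `ℓ₁ < ℓ`, every factor `ℓᵢ ≤ ℓ₁` is below `ℓ`. Compare `ℓ₁ ⋯ ℓₖ` with a word `s ≥ ℓ` factor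
by factor: if `ℓᵢ` is not a prefix of `s`, it already decides `ℓᵢ ⋯ ℓₖ < s`; otherwise `ℓᵢ < ℓ ≤ s`
forces `ℓᵢ` to be a proper prefix of `ℓ`, and the Lyndon property says that the remaining suffix
of `ℓ` is still `≥ ℓ`, so the comparison continues with the rest of `s`. Conversely `ℓ₁` is a
prefix of `w`. -/

namespace List

variable {α : Type*}

theorem append_lt_of_lt_of_not_prefix [LT α] {x s : List α} (h : x < s) (hx : ¬ x <+: s)
    (y : List α) : x ++ y < s := by
  induction h with
  | nil => exact absurd nil_prefix hx
  | cons _ ih => exact Lex.cons (ih fun hp => hx (cons_prefix_cons.mpr ⟨rfl, hp⟩))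
  | rel hab => exact Lex.rel hab

theorem IsPrefix.prefix_of_lt_of_le [LinearOrder α] {x ℓ s : List α} (hxs : x <+: s)
    (hxℓ : x < ℓ) (hℓs : ℓ ≤ s) : x <+: ℓ := by
  by_contra hx
  obtain ⟨t, rfl⟩ := hxs
  exact not_lt.2 hℓs (append_lt_of_lt_of_not_prefix hxℓ hx t)

theorem le_of_append_le_append_left [LinearOrder α] {x y z : List α} (h : x ++ y ≤ x ++ z) :
    y ≤ z :=
  not_lt.1 fun hzy => not_lt.2 h (append_left_lt hzy)

end List

theorem IsLyndon.le_of_suffix {ℓ y : List I} (hℓ : IsLyndon ℓ) (hy : y <:+ ℓ) (hy₀ : y ≠ []) :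
    ℓ ≤ y := by
  obtain ⟨x, rfl⟩ := hy
  rcases eq_or_ne x [] with rfl | hx
  · exact le_rfl
  · have hlt := hℓ.2 x.length (List.length_pos_iff.mpr hx) (by simp [List.length_pos_iff.mpr hy₀])
    rw [List.drop_left] at hlt
    exact hlt.le

theorem IsLyndon.flatten_lt {ℓ : List I} (hℓ : IsLyndon ℓ) {fs : List (List I)}
    (hfs : ∀ f ∈ fs, f < ℓ) {s : List I} (hℓs : ℓ ≤ s) : fs.flatten < s := by
  induction fs generalizing s with
  | nil =>
    rcases s with _ | ⟨a, s⟩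
    · exact absurd (le_antisymm hℓs (le_of_not_gt (List.not_lt_nil ℓ))) hℓ.1
    · exact List.nil_lt_cons a s
  | cons x rest ih =>
    have hxℓ : x < ℓ := hfs x List.mem_cons_self
    by_cases hxs : x <+: s
    · obtain ⟨s', rfl⟩ := hxs
      obtain ⟨ℓ', rfl⟩ := (List.prefix_append x s').prefix_of_lt_of_le hxℓ hℓs
      have hℓ' : ℓ' ≠ [] := by
        rintro rfl
        simp at hxℓ
      have hℓs' : x ++ ℓ' ≤ s' :=
        (hℓ.le_of_suffix (List.suffix_append x ℓ') hℓ').trans (List.le_of_append_le_append_left hℓs)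
      exact List.append_left_lt (ih (fun f hf => hfs f (List.mem_cons_of_mem x hf)) hℓs')
    · exact List.append_lt_of_lt_of_not_prefix (hxℓ.trans_le hℓs) hxs _

/-- For a Lyndon word `ℓ` and a word `w` with canonical factorization
`fs = [ℓ1, …, ℓk]`, one has `ℓ > w` if and only if `ℓ > ℓ1`. -/
theorem lyndon_gt_iff_gt_head (ℓ w : List I) (fs : List (List I))
    (hℓ : IsLyndon ℓ) (hfac : IsCanonicalFactorization w fs) :
    w < ℓ ↔ fs.head hfac.2.1 < ℓ := by
  obtain ⟨rfl, hne, -, hchain⟩ := hfac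
  rcases fs with _ | ⟨f, rest⟩
  · exact absurd rfl hne
  -- core's `IsPrefix.le` concerns core's `≤` on lists, `¬ l₂ < l₁`, not Mathlib's linear order
  have hf_le : f ≤ (f :: rest).flatten := le_of_not_gt (List.prefix_append f rest.flatten).le
  have hle_head : ∀ g ∈ f :: rest, g ≤ f :=
    List.forall_mem_cons.2 ⟨le_rfl, (List.pairwise_cons.1 (List.isChain_iff_pairwise.1 hchain)).1⟩
  exact ⟨hf_le.trans_lt, fun hf => hℓ.flatten_lt (fun g hg => (hle_head g hg).trans_lt hf) le_rfl⟩
end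

section
/- For a Lyndon word w of length > 1, the lexicographically smallest proper nonempty suffix of w is w^r, the longest proper suffix of w that is Lyndon. -/
/- Words over a linearly ordered alphabet `I` are lists, compared by the
lexicographic order of Lean's `LinearOrder (List I)` instance, in which a word
is smaller than any word of which it is a proper prefix. -/

variable {I : Type*} [LinearOrder I]

/-- For a Lyndon word `w` of length `> 1`, the lexicographically smallest proper
nonempty suffix of `w` is `w^r`, the longest proper suffix of `w` that is Lyndon. -/
theorem longestLyndonSuffix_min (w r : List I)
    (hw : IsLyndon w) (hlen : 1 < w.length) (hr : LongestLyndonSuffix w r) :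
    ∀ s : List I, s ≠ [] → s.length < w.length → s <:+ w → r ≤ s := by
  intro s hs hslen hssuf
  obtain ⟨hrsuf, hrlen, hrLyn, hrmax⟩ := hr
  set T : Finset (List I) := (Finset.Ioo 0 w.length).image (fun i => w.drop i) with hT
  have hTne : T.Nonempty :=
    ⟨w.drop 1, Finset.mem_image.2 ⟨1, Finset.mem_Ioo.2 ⟨one_pos, hlen⟩, rfl⟩⟩
  set m := T.min' hTne with hm
  have hmem : ∀ u : List I, u ≠ [] → u.length < w.length → u <:+ w → u ∈ T := by
    intro u hu hul husuf
    obtain ⟨t, rfl⟩ := husuf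
    refine Finset.mem_image.2 ⟨t.length, Finset.mem_Ioo.2 ⟨?_, ?_⟩, ?_⟩
    · simp at hul; omega
    · have : 0 < u.length := List.length_pos_iff.2 hu
      simp; omega
    · simp
  have hmmem := T.min'_mem hTne
  obtain ⟨i, hi, hieq⟩ := Finset.mem_image.1 hmmem
  rw [Finset.mem_Ioo] at hi
  rw [← hm] at hieq
  have hmlen : m.length = w.length - i := by rw [← hieq]; simp
  have hmne : m ≠ [] := by
    intro h
    have := congrArg List.length h
    rw [hmlen] at this; simp at this; omega
  have hmLyn : IsLyndon m := by
    refine ⟨hmne, ?_⟩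
    intro j hj hjm
    have hij : i + j < w.length := by omega
    have hdrop : m.drop j = w.drop (i + j) := by
      rw [← hieq, List.drop_drop]
    rw [hdrop]
    have hmemd : w.drop (i + j) ∈ T :=
      Finset.mem_image.2 ⟨i + j, Finset.mem_Ioo.2 ⟨by omega, hij⟩, rfl⟩
    have hle := T.min'_le _ hmemd
    have hne : m ≠ w.drop (i + j) := by
      intro h
      have := congrArg List.length h
      rw [hmlen] at this; simp at this; omega
    exact lt_of_le_of_ne hle hne
  have hmsuf : m <:+ w := by rw [← hieq]; exact List.drop_suffix i w
  have hmlenlt : m.length < w.length := by omega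
  have hml : m.length ≤ r.length := hrmax m hmsuf hmlenlt hmLyn
  have hrmem : r ∈ T := hmem r hrLyn.1 hrlen hrsuf
  have hmr : m ≤ r := T.min'_le _ hrmem
  have hmeq : m = r := by
    rcases lt_or_eq_of_le hml with h | h
    · -- m is a proper suffix of r; since r is Lyndon, r < m, contradiction
      exfalso
      obtain ⟨t2, ht2⟩ := hrsuf
      have hrd : r = w.drop t2.length := by rw [← ht2, List.drop_left]
      have hrl : r.length = w.length - t2.length := by
        have := congrArg List.length ht2
        simp at this; omega
      have hit : t2.length < i := by omega
      have hmd : m = r.drop (i - t2.length) := by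
        rw [hrd, List.drop_drop, ← hieq]
        congr 1; omega
      have : r < r.drop (i - t2.length) := hrLyn.2 _ (by omega) (by omega)
      rw [← hmd] at this
      exact absurd hmr (not_le.2 this)
    · -- equal lengths: m = r
      obtain ⟨t1, ht1⟩ := hmsuf
      obtain ⟨t2, ht2⟩ := hrsuf
      have hl : t1.length = t2.length := by
        have e1 := congrArg List.length ht1
        have e2 := congrArg List.length ht2
        simp at e1 e2; omega
      exact List.append_inj_right (ht1.trans ht2.symm) hl
  have hsmem : s ∈ T := hmem s hs hslen hssuf
  calc r = m := hmeq.symm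
    _ ≤ s := T.min'_le _ hsmem
end

section
/- Let ℓ be a Lyndon word with |ℓ| > 1 and |ℓ^l| > 1, where ℓ = ℓ^l ℓ^r is the costandard factorization. Then (ℓ^l)^r ≥ ℓ^r, i.e., the longest proper Lyndon suffix of ℓ^l is lexicographically greater than or equal to the longest proper Lyndon suffix of ℓ. -/
/- Words over a linearly ordered alphabet `I` are lists, compared by the
lexicographic order of Lean's `LinearOrder (List I)` instance, in which a word
is smaller than any word of which it is a proper prefix. -/

variable {I : Type*} [LinearOrder I]

/-!
If `(ℓ^l)^r < ℓ^r`, then, since the concatenation `u ++ v` of Lyndon words with `u < v` is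
Lyndon, `(ℓ^l)^r ++ ℓ^r` is a proper Lyndon suffix of `ℓ` longer than `ℓ^r`, contradicting
the maximality of `ℓ^r`.
-/

theorem List.append_lt_append_of_lt_of_not_prefix {α : Type*} [LT α] {u t : List α}
    (h : u < t) (hnp : ¬ u <+: t) (v w : List α) : u ++ v < t ++ w := by
  induction h with
  | nil => exact absurd List.nil_prefix hnp
  | cons _ ih => exact List.Lex.cons (ih fun hp => hnp (List.cons_prefix_cons.2 ⟨rfl, hp⟩))
  | rel h => exact List.Lex.rel h

namespace IsLyndon

variable {u v : List I}

theorem append_lt_of_lt (hv : IsLyndon v) (hu : u ≠ []) (huv : u < v) : u ++ v < v := by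
  by_cases hp : u <+: v
  · obtain ⟨t, rfl⟩ := hp
    have ht : t ≠ [] := by rintro rfl; simp at huv
    have hvt : u ++ t < t := by
      simpa using hv.2 u.length (List.length_pos_iff.2 hu)
        (by simpa using List.length_pos_iff.2 ht)
    exact List.append_left_lt hvt
  · simpa using List.append_lt_append_of_lt_of_not_prefix huv hp v []

theorem append (hu : IsLyndon u) (hv : IsLyndon v) (huv : u < v) : IsLyndon (u ++ v) := by
  refine ⟨by simp [hu.1], fun i hi hilen => ?_⟩
  have huv_lt_v : u ++ v < v := hv.append_lt_of_lt hu.1 huv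
  rcases lt_trichotomy i u.length with h | rfl | h
  · rw [List.drop_append_of_le_length h.le]
    have hnp : ¬ u <+: u.drop i := fun hp => by
      have := hp.length_le
      simp only [List.length_drop] at this
      omega
    exact List.append_lt_append_of_lt_of_not_prefix (hu.2 i hi h) hnp v v
  · simpa using huv_lt_v
  · rw [List.drop_append, List.drop_eq_nil_of_le h.le, List.nil_append]
    have hilen' : i - u.length < v.length := by
      simp only [List.length_append] at hilen
      omega
    exact huv_lt_v.trans (hv.2 _ (by omega) hilen')

end IsLyndon

theorem costandard_left_suffix_ge_general (ℓ p r pr : List I)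
    (hr : LongestLyndonSuffix ℓ r) (hsplit : ℓ = p ++ r)
    (hpr : LongestLyndonSuffix p pr) :
    r ≤ pr := by
  by_contra! hlt
  obtain ⟨-, -, hrL, hrmax⟩ := hr
  obtain ⟨⟨t, rfl⟩, hprlen, hprL, -⟩ := hpr
  have hsuf : pr ++ r <:+ ℓ := ⟨t, by rw [hsplit, List.append_assoc]⟩
  have hsuflen : (pr ++ r).length < ℓ.length := by
    simp only [hsplit, List.length_append] at hprlen ⊢
    omega
  have hmax := hrmax (pr ++ r) hsuf hsuflen (hprL.append hrL hlt)
  have hprpos : 0 < pr.length := List.length_pos_iff.2 hprL.1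
  simp only [List.length_append] at hmax
  omega

/-- If `ℓ = ℓ^l ℓ^r` is the costandard factorization of a Lyndon word `ℓ` with
`|ℓ| > 1` and `|ℓ^l| > 1`, then `(ℓ^l)^r ≥ ℓ^r`. -/
theorem costandard_left_suffix_ge (ℓ p r pr : List I)
    (hℓ : IsLyndon ℓ) (hlen : 1 < ℓ.length)
    (hr : LongestLyndonSuffix ℓ r) (hsplit : ℓ = p ++ r) (hplen : 1 < p.length)
    (hpr : LongestLyndonSuffix p pr) :
    r ≤ pr :=
  costandard_left_suffix_ge_general ℓ p r pr hr hsplit hpr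
end

section
/- Let ℓ be a Lyndon word with |ℓ| > 1 and |ℓ^{rs}| > 1, where ℓ = ℓ^{ls} ℓ^{rs} is the standard factorization. Then (ℓ^{rs})^{ls} ≤ ℓ^{ls}, i.e., the longest proper Lyndon prefix of ℓ^{rs} is lexicographically less than or equal to the longest proper Lyndon prefix of ℓ. -/
/- Words over a linearly ordered alphabet `I` are lists, compared by the
lexicographic order of Lean's `LinearOrder (List I)` instance, in which a word
is smaller than any word of which it is a proper prefix. -/

variable {I : Type*} [LinearOrder I]

lemma list_lt_def' {a b : List I} : a < b ↔ List.Lex (· < ·) a b := Iff.rfl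

lemma lex_append_of_not_prefix' : ∀ {a b : List I},
    List.Lex (· < ·) a b → ¬ a <+: b →
    ∀ x y : List I, List.Lex (· < ·) (a ++ x) (b ++ y)
  | _, _, List.Lex.nil, hp => absurd (List.nil_prefix) hp
  | _, _, List.Lex.rel hab, _ => fun _ _ => List.Lex.rel hab
  | _, _, @List.Lex.cons _ _ a as bs h, hp => fun x y =>
      List.Lex.cons (lex_append_of_not_prefix' h
        (fun hpre => hp (List.cons_prefix_cons.mpr ⟨rfl, hpre⟩)) x y)

lemma lyndon_append_lt' {u v : List I} (hu : IsLyndon u) (hv : IsLyndon v)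
    (huv : u < v) : u ++ v < v := by
  by_cases hp : u <+: v
  · obtain ⟨t, rfl⟩ := hp
    have ht : t ≠ [] := by rintro rfl; simp at huv
    have hvt : u ++ t < t := by
      have := hv.2 u.length (by
        have : u ≠ [] := hu.1
        exact List.length_pos_iff.mpr this) (by
        simp [List.length_append]
        exact List.length_pos_iff.mpr ht)
      simpa using this
    exact list_lt_def'.mpr (List.Lex.append_left _ (list_lt_def'.mp hvt) u)
  · have := lex_append_of_not_prefix' (list_lt_def'.mp huv) hp v []
    simpa using list_lt_def'.mpr this

lemma isLyndon_append' {u v : List I} (hu : IsLyndon u) (hv : IsLyndon v)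
    (huv : u < v) : IsLyndon (u ++ v) := by
  refine ⟨by simp [hu.1], fun i hi hilen => ?_⟩
  rcases lt_trichotomy i u.length with h | h | h
  · rw [List.drop_append, Nat.sub_eq_zero_of_le h.le, List.drop_zero]
    have h1 : u < u.drop i := hu.2 i hi h
    have hnp : ¬ u <+: u.drop i := fun hpre => by
      have := hpre.length_le
      simp [List.length_drop] at this
      omega
    exact list_lt_def'.mpr (lex_append_of_not_prefix' (list_lt_def'.mp h1) hnp v v)
  · rw [h, List.drop_left]
    exact lyndon_append_lt' hu hv huv
  · have hdrop : (u ++ v).drop i = v.drop (i - u.length) := by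
      rw [List.drop_append, List.drop_eq_nil_of_le h.le, List.nil_append]
    have h2 : v < v.drop (i - u.length) := hv.2 _ (by omega) (by
      simp [List.length_append] at hilen; omega)
    rw [hdrop]
    exact lt_trans (lyndon_append_lt' hu hv huv) h2

/-- If `ℓ = ℓ^{ls} ℓ^{rs}` is the standard factorization of a Lyndon word `ℓ` with
`|ℓ| > 1` and `|ℓ^{rs}| > 1`, then `(ℓ^{rs})^{ls} ≤ ℓ^{ls}`. -/
theorem standard_right_prefix_le (ℓ ls rs rsls : List I)
    (hℓ : IsLyndon ℓ) (hlen : 1 < ℓ.length)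
    (hls : LongestLyndonPrefix ℓ ls) (hsplit : ℓ = ls ++ rs) (hrslen : 1 < rs.length)
    (hrsls : LongestLyndonPrefix rs rsls) :
    rsls ≤ ls := by
  by_contra hcon
  have hlt : ls < rsls := not_le.mp hcon
  have hL : IsLyndon (ls ++ rsls) := isLyndon_append' hls.2.2.1 hrsls.2.2.1 hlt
  have hpre : ls ++ rsls <+: ℓ := by
    obtain ⟨t, ht⟩ := hrsls.1
    exact ⟨t, by rw [hsplit, List.append_assoc, ht]⟩
  have hlenlt : (ls ++ rsls).length < ℓ.length := by
    have := hrsls.2.1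
    simp [hsplit, List.length_append]
    omega
  have h2 := hls.2.2.2 _ hpre hlenlt hL
  rw [List.length_append] at h2
  have hpos : 0 < rsls.length := List.length_pos_iff.mpr hrsls.2.2.1.1
  omega
end

section
/- Let ℓ = ℓ1 ℓ2 be a factorization of a Lyndon word ℓ with ℓ1 and ℓ2 both Lyndon. Define a sequence of suffixes of ℓ by s_0 = ℓ2, p_0 = ℓ1, and, as long as |p_i| > 1, s_{i+1} = p_i^r s_i and p_{i+1} = p_i^l (where p_i = p_i^l p_i^r is the costandard factorization of p_i). Then the longest proper Lyndon suffix ℓ^r of ℓ equals s_j for some index j ≥ 0. -/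
/- Words over a linearly ordered alphabet `I` are lists, compared by the
lexicographic order of Lean's `LinearOrder (List I)` instance, in which a word
is smaller than any word of which it is a proper prefix. -/

variable {I : Type*} [LinearOrder I]

/-! The invariant is `ℓ = p_i s_i` with `|s_i| ≤ |ℓ^r|`. As long as `s_i ≠ ℓ^r`, the word
`s_i` is a proper suffix of `ℓ^r`, say `ℓ^r = t s_i`. If `s_{i+1} = p_i^r s_i` were longer than
`ℓ^r`, then `t` would be a proper nonempty suffix of the Lyndon word `p_i^r`, so `p_i^r < t`
and `p_i^r s_i` would be a Lyndon proper suffix of `ℓ` longer than `ℓ^r`. Hence the invariant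
persists while `|s_i|` strictly grows, so the sequence must reach `ℓ^r`. -/

namespace List

theorem Lex.append_of_not_prefix {α : Type*} {r : α → α → Prop} :
    ∀ {a b : List α}, Lex r a b → ¬ a <+: b → ∀ v w, Lex r (a ++ v) (b ++ w)
  | _, _, .nil, hp => absurd nil_prefix hp
  | _, _, .rel h, _ => fun _ _ => .rel h
  | _, _, .cons h, hp => fun v w =>
      .cons (append_of_not_prefix h (fun hq => hp (cons_prefix_cons.2 ⟨rfl, hq⟩)) v w)

theorem append_lt_append_of_lt_of_length_lt {a b : List I} (h : a < b)
    (hlen : b.length < a.length) (v w : List I) : a ++ v < b ++ w :=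
  Lex.append_of_not_prefix h (fun hab => absurd hab.length_le (by omega)) v w

end List

open List

/-- If `t` is a proper nonempty suffix of `u`, then `u < t`, and this comparison is decided
before `t` runs out, so it survives appending `v`. -/
theorem IsLyndon.append_of_isSuffix {u v t : List I} (hu : IsLyndon u) (ht : t <:+ u)
    (ht_ne : t ≠ []) (ht_lt : t.length < u.length) (htv : IsLyndon (t ++ v)) :
    IsLyndon (u ++ v) := by
  obtain ⟨x, rfl⟩ := ht
  have ht_pos := length_pos_iff.2 ht_ne
  have hut : x ++ t < t := by
    simpa using hu.2 x.length (by simp at ht_lt; omega) (by simp; omega)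
  refine ⟨by simp [ht_ne], fun i hi0 hi => ?_⟩
  rcases lt_or_ge i (x ++ t).length with h | h
  · rw [drop_append_of_le_length h.le]
    exact append_lt_append_of_lt_of_length_lt (hu.2 i hi0 h) (by simp; omega) v v
  · obtain ⟨k, rfl⟩ := Nat.exists_eq_add_of_le h
    have htv_k : t ++ v < v.drop k := by
      simpa using htv.2 (t.length + k) (by omega) (by simp at hi ⊢; omega)
    rw [drop_length_add_append]
    exact (append_lt_append_of_lt_of_length_lt hut (by simp at ht_lt ⊢; omega) v v).trans htv_k

theorem LongestLyndonSuffix.length_append_le {ℓ r pl pr s : List I}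
    (hr : LongestLyndonSuffix ℓ r) (hℓ : ℓ = pl ++ pr ++ s) (hpl : pl ≠ [])
    (hpr : IsLyndon pr) (hs : s.length < r.length) : (pr ++ s).length ≤ r.length := by
  obtain ⟨hr_suf, -, hr_lyndon, hr_max⟩ := hr
  have hprs_suf : pr ++ s <:+ ℓ := ⟨pl, by rw [hℓ, append_assoc]⟩
  have hprs_lt : (pr ++ s).length < ℓ.length := by
    have := length_pos_iff.2 hpl
    simp [hℓ]; omega
  by_contra! hlong
  obtain ⟨t, rfl⟩ := suffix_of_suffix_length_le (suffix_append (pl ++ pr) s)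
    (hℓ ▸ hr_suf) hs.le
  have ht_suf : t <:+ pr := by
    have hts : t ++ s <:+ pl ++ pr ++ s := hℓ ▸ hr_suf
    exact suffix_of_suffix_length_le (suffix_append_self_iff.1 hts) (suffix_append pl pr)
      (by simp at hlong; omega)
  have ht_ne : t ≠ [] := by rintro rfl; simp at hs
  have hprs : IsLyndon (pr ++ s) :=
    hpr.append_of_isSuffix ht_suf ht_ne (by simp at hlong; omega) hr_lyndon
  exact absurd (hr_max _ hprs_suf hprs_lt hprs) (by omega)

theorem costandard_suffix_mem_seq_general (ℓ ℓ1 ℓ2 : List I)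
    (h1 : IsLyndon ℓ1) (h2 : IsLyndon ℓ2) (hsplit : ℓ = ℓ1 ++ ℓ2)
    (s p : ℕ → List I) (hs0 : s 0 = ℓ2) (hp0 : p 0 = ℓ1)
    (hstep : ∀ i, 1 < (p i).length →
      ∃ pl pr : List I, LongestLyndonSuffix (p i) pr ∧ p i = pl ++ pr ∧
        s (i + 1) = pr ++ s i ∧ p (i + 1) = pl)
    (r : List I) (hr : LongestLyndonSuffix ℓ r) :
    ∃ j : ℕ, (∀ i < j, 1 < (p i).length) ∧ s j = r := by
  by_contra! hnever
  have hℓ2 : ℓ2.length ≤ r.length :=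
    hr.2.2.2 ℓ2 ⟨ℓ1, hsplit.symm⟩ (by simp [hsplit, length_pos_iff.2 h1.1]) h2
  have hinv : ∀ i, (∀ k < i, 1 < (p k).length) ∧ ℓ = p i ++ s i ∧
      (s i).length ≤ r.length ∧ i ≤ (s i).length := by
    intro i
    induction i with
    | zero => exact ⟨by simp, by rw [hp0, hs0, hsplit], hs0 ▸ hℓ2, by simp⟩
    | succ i ih =>
      obtain ⟨hlong, hfac, hle, hgrow⟩ := ih
      have hlt : (s i).length < r.length := lt_of_le_of_ne hle fun heq => hnever i hlong
        ((suffix_of_suffix_length_le ⟨p i, hfac.symm⟩ hr.1 hle).eq_of_length heq)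
      have hp_long : 1 < (p i).length := by
        have := congrArg length hfac; have := hr.2.1; simp at *; omega
      obtain ⟨pl, pr, hpr, hp_eq, hs_succ, hp_succ⟩ := hstep i hp_long
      have hpl : pl ≠ [] := by
        have := congrArg length hp_eq; have := hpr.2.1; rintro rfl; simp at *; omega
      have hfac' : ℓ = pl ++ pr ++ s i := hp_eq ▸ hfac
      have hpr_pos := length_pos_iff.2 hpr.2.2.1.1
      refine ⟨fun k hk => ?_, by rw [hp_succ, hs_succ, ← append_assoc, ← hfac'], ?_, ?_⟩
      · rcases Nat.lt_succ_iff_lt_or_eq.1 hk with hk | rfl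
        exacts [hlong k hk, hp_long]
      · exact hs_succ ▸ hr.length_append_le hfac' hpl hpr.2.2.1 hlt
      · simp [hs_succ]; omega
  have := hinv (r.length + 1)
  omega

/-- For any factorization `ℓ = ℓ1 ℓ2` of a Lyndon word into two Lyndon words, iterating
`s_{i+1} = p_i^r s_i`, `p_{i+1} = p_i^l` (costandard factorizations) from `s_0 = ℓ2`,
`p_0 = ℓ1`, the longest proper Lyndon suffix `ℓ^r` of `ℓ` equals some `s_j`. -/
theorem costandard_suffix_mem_seq (ℓ ℓ1 ℓ2 : List I)
    (hℓ : IsLyndon ℓ) (h1 : IsLyndon ℓ1) (h2 : IsLyndon ℓ2) (hsplit : ℓ = ℓ1 ++ ℓ2)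
    (s p : ℕ → List I) (hs0 : s 0 = ℓ2) (hp0 : p 0 = ℓ1)
    (hstep : ∀ i, 1 < (p i).length →
      ∃ pl pr : List I, LongestLyndonSuffix (p i) pr ∧ p i = pl ++ pr ∧
        s (i + 1) = pr ++ s i ∧ p (i + 1) = pl)
    (r : List I) (hr : LongestLyndonSuffix ℓ r) :
    ∃ j : ℕ, (∀ i < j, 1 < (p i).length) ∧ s j = r :=
  costandard_suffix_mem_seq_general ℓ ℓ1 ℓ2 h1 h2 hsplit s p hs0 hp0 hstep r hr
end

section
/- Let ℓ = ℓ1 ℓ2 be a factorization of a Lyndon word ℓ with ℓ1 and ℓ2 both Lyndon, and suppose ℓ2 is not equal to the longest proper Lyndon suffix ℓ^r of ℓ. Then |ℓ1| > 1, and writing the costandard factorization ℓ1 = u v (so u = ℓ1^l and v = ℓ1^r), the word v ℓ2 is Lyndon; thus ℓ = u v ℓ2 with u, v, uv and vℓ2 all Lyndon. -/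
/- Words over a linearly ordered alphabet `I` are lists, compared by the
lexicographic order of Lean's `LinearOrder (List I)` instance, in which a word
is smaller than any word of which it is a proper prefix. -/

variable {I : Type*} [LinearOrder I]

/-! Since `ℓ2` is a proper Lyndon suffix of `ℓ` other than the longest one `ℓ^r`, it is a proper
suffix of it: `ℓ^r = s ℓ2` with `s` a nonempty proper suffix of `ℓ1`, so `|ℓ1| > 1`. As `ℓ^r` is
Lyndon, `s ℓ2 < ℓ2`, whence `s < ℓ2`. The right factor `v` of the costandard factorization of `ℓ1`
is the least proper suffix of `ℓ1`, so `v ≤ s < ℓ2`, and the product of Lyndon words `x < y` is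
Lyndon. -/

variable {α : Type*}

namespace List

theorem Lex.append_of_not_prefix_s8 {r : α → α → Prop} {x y : List α} (h : Lex r x y)
    (hxy : ¬ x <+: y) (a b : List α) : Lex r (x ++ a) (y ++ b) := by
  induction h with
  | nil => exact absurd nil_prefix hxy
  | cons _ ih => exact .cons (ih fun hp => hxy (cons_prefix_cons.2 ⟨rfl, hp⟩))
  | rel h => exact .rel h

variable [LinearOrder α]

theorem lt_append_of_ne_nil (x : List α) {t : List α} (ht : t ≠ []) : x < x ++ t := by
  obtain ⟨c, t, rfl⟩ := exists_cons_of_ne_nil ht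
  simpa using append_left_lt (l₁ := x) (nil_lt_cons c t)

theorem IsPrefix.lt_of_ne {x y : List α} (h : x <+: y) (hne : x ≠ y) : x < y := by
  obtain ⟨t, rfl⟩ := h
  exact lt_append_of_ne_nil x (by rintro rfl; simp at hne)

theorem append_lt_append_left_iff (x : List α) {a b : List α} : x ++ a < x ++ b ↔ a < b :=
  StrictMono.lt_iff_lt fun _ _ => append_left_lt

theorem append_lt_append_iff_of_not_prefix {x y : List α} (hxy : ¬ x <+: y) (hyx : ¬ y <+: x)
    (a b : List α) : x ++ a < y ++ b ↔ x < y := by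
  refine ⟨fun h => ?_, fun h => Lex.append_of_not_prefix_s8 h hxy a b⟩
  rcases lt_trichotomy x y with hlt | rfl | hgt
  · exact hlt
  · exact absurd prefix_rfl hxy
  · exact absurd h (asymm (Lex.append_of_not_prefix_s8 hgt hyx b a))

theorem lt_of_append_lt_self {x y : List α} (h : x ++ y < y) : x < y := by
  have hy : y ≠ [] := by rintro rfl; exact not_lt_nil _ h
  by_cases hyx : y <+: x
  · obtain ⟨t, rfl⟩ := hyx
    rw [append_assoc] at h
    exact absurd h (asymm (lt_append_of_ne_nil y (by simp [hy])))
  by_cases hxy : x <+: y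
  · exact hxy.lt_of_ne (by rintro rfl; exact hyx prefix_rfl)
  · simpa using (append_lt_append_iff_of_not_prefix hxy hyx y []).1 (by simpa using h)

end List

open List

theorem isLyndon_iff_lt_suffix {w : List I} :
    IsLyndon w ↔ w ≠ [] ∧ ∀ s, s <:+ w → s ≠ [] → s.length < w.length → w < s := by
  refine and_congr_right fun _ => ⟨fun h s hs hne hlen => ?_, fun h i hi hil => ?_⟩
  · obtain ⟨t, rfl⟩ := hs
    have := length_pos_iff.2 hne
    simpa using h t.length (by simp at hlen; omega) (by simp; omega)
  · exact h _ (drop_suffix i w) (by simp; omega) (by simp; omega)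

theorem IsLyndon.lt_of_suffix {w s : List I} (h : IsLyndon w) (hs : s <:+ w) (hne : s ≠ [])
    (hlen : s.length < w.length) : w < s :=
  (isLyndon_iff_lt_suffix.1 h).2 s hs hne hlen

theorem IsLyndon.le_of_suffix_s8 {w s : List I} (h : IsLyndon w) (hs : s <:+ w) (hne : s ≠ []) :
    w ≤ s := by
  rcases hs.length_le.lt_or_eq with hlen | hlen
  · exact (h.lt_of_suffix hs hne hlen).le
  · exact (hs.eq_of_length hlen).ge

theorem IsLyndon.append_s8 {x y : List I} (hx : IsLyndon x) (hy : IsLyndon y) (hxy : x < y) :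
    IsLyndon (x ++ y) := by
  have hxy_y : x ++ y < y := by
    by_cases hp : x <+: y
    · obtain ⟨t, rfl⟩ := hp
      have ht : t ≠ [] := by rintro rfl; simp at hxy
      exact (append_lt_append_left_iff x).2
        (hy.lt_of_suffix (suffix_append x t) ht (by simpa using length_pos_iff.2 hx.1))
    · simpa using Lex.append_of_not_prefix_s8 hxy hp y []
  refine isLyndon_iff_lt_suffix.2 ⟨by simp [hx.1], fun s hs hne hlen => ?_⟩
  rcases le_or_gt s.length y.length with hsy | hys
  · exact hxy_y.trans_le
      (hy.le_of_suffix_s8 (suffix_of_suffix_length_le hs (suffix_append x y) hsy) hne)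
  · obtain ⟨w, rfl⟩ := suffix_of_suffix_length_le (suffix_append x y) hs hys.le
    have hwx : w <:+ x := suffix_append_self_iff.1 hs
    have hwne : w ≠ [] := by rintro rfl; simp at hys
    have hwlen : w.length < x.length := by simpa using hlen
    exact Lex.append_of_not_prefix_s8 (hx.lt_of_suffix hwx hwne hwlen)
      (fun hp => absurd hp.length_le (by omega)) y y

-- A least proper suffix `m` is Lyndon, hence no longer than `v`, hence a suffix of `v`: `v ≤ m`.
theorem LongestLyndonSuffix.le_of_suffix_s8 {l v s : List I} (hv : LongestLyndonSuffix l v)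
    (hs : s <:+ l) (hne : s ≠ []) (hlen : s.length < l.length) : v ≤ s := by
  obtain ⟨hvl, hvlen, hvL, hmax⟩ := hv
  let proper : Finset (List I) := l.tails.toFinset.filter fun s => s ≠ [] ∧ s.length < l.length
  have mem_proper {s : List I} : s ∈ proper ↔ s <:+ l ∧ s ≠ [] ∧ s.length < l.length := by
    simp [proper, mem_tails]
  obtain ⟨m, hm, hmin⟩ := proper.exists_min_image id ⟨v, mem_proper.2 ⟨hvl, hvL.1, hvlen⟩⟩
  obtain ⟨hml, hmne, hmlen⟩ := mem_proper.1 hm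
  have hmL : IsLyndon m := by
    refine isLyndon_iff_lt_suffix.2 ⟨hmne, fun s hs hne hslen => ?_⟩
    refine lt_of_le_of_ne (hmin s (mem_proper.2 ⟨hs.trans hml, hne, hslen.trans hmlen⟩)) ?_
    rintro rfl
    exact lt_irrefl _ hslen
  have hmv : m <:+ v := suffix_of_suffix_length_le hml hvl (hmax m hml hmlen hmL)
  exact (hvL.le_of_suffix_s8 hmv hmne).trans (hmin s (mem_proper.2 ⟨hs, hne, hlen⟩))

theorem LongestLyndonSuffix.isLyndon_left {l u v : List I} (hv : LongestLyndonSuffix l v)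
    (hl : IsLyndon l) (huv : l = u ++ v) : IsLyndon u := by
  subst huv
  have hvne : v ≠ [] := hv.2.2.1.1
  have hune : u ≠ [] := by rintro rfl; simpa using hv.2.1
  refine isLyndon_iff_lt_suffix.2 ⟨hune, fun w hw hwne hwlen => ?_⟩
  have hwv : w ++ v <:+ u ++ v := suffix_append_self_iff.2 hw
  have huv_wv : u ++ v < w ++ v := hl.lt_of_suffix hwv (by simp [hvne]) (by simpa using hwlen)
  by_cases hp : w <+: u
  · obtain ⟨t, rfl⟩ := hp
    have htv : t ++ v <:+ w ++ t ++ v := by simp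
    rw [append_assoc, append_lt_append_left_iff] at huv_wv
    exact absurd huv_wv (not_lt.2 (hv.le_of_suffix_s8 htv (by simp [hvne])
      (by simpa using length_pos_iff.2 hwne)))
  · exact (append_lt_append_iff_of_not_prefix (fun h => absurd h.length_le (by omega)) hp v v).1
      huv_wv

theorem LongestLyndonSuffix.exists_eq_append_of_ne {l r w : List I}
    (hr : LongestLyndonSuffix l r) (hw : IsLyndon w) (hwl : w <:+ l)
    (hlen : w.length < l.length) (hne : w ≠ r) : ∃ s, s ≠ [] ∧ r = s ++ w := by
  obtain ⟨s, rfl⟩ := suffix_of_suffix_length_le hwl hr.1 (hr.2.2.2 w hwl hlen hw)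
  exact ⟨s, by rintro rfl; exact hne rfl, rfl⟩

theorem three_way_lyndon_general (ℓ ℓ1 ℓ2 r : List I)
    (h1 : IsLyndon ℓ1) (h2 : IsLyndon ℓ2) (hsplit : ℓ = ℓ1 ++ ℓ2)
    (hr : LongestLyndonSuffix ℓ r) (hne : ℓ2 ≠ r) :
    1 < ℓ1.length ∧
      ∀ u v : List I, ℓ1 = u ++ v → LongestLyndonSuffix ℓ1 v →
        IsLyndon u ∧ IsLyndon v ∧ IsLyndon (u ++ v) ∧ IsLyndon (v ++ ℓ2) := by
  subst hsplit
  obtain ⟨s, hs, rfl⟩ := hr.exists_eq_append_of_ne h2 (suffix_append ℓ1 ℓ2)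
    (by simpa using length_pos_iff.2 h1.1) hne
  obtain ⟨hrl, hrlen, hrL, -⟩ := hr
  have hs1 : s <:+ ℓ1 := suffix_append_self_iff.1 hrl
  have hslen : s.length < ℓ1.length := by simpa using hrlen
  have hslt : s < ℓ2 := lt_of_append_lt_self <|
    hrL.lt_of_suffix (suffix_append s ℓ2) h2.1 (by simpa using length_pos_iff.2 hs)
  refine ⟨by have := length_pos_iff.2 hs; omega, fun u v huv hv => ?_⟩
  have hvL : IsLyndon v := hv.2.2.1
  have hvs : v ≤ s := hv.le_of_suffix_s8 hs1 hs hslen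
  exact ⟨hv.isLyndon_left h1 huv, hvL, huv ▸ h1, hvL.append_s8 h2 (hvs.trans_lt hslt)⟩

/-- If `ℓ = ℓ1 ℓ2` with `ℓ, ℓ1, ℓ2` Lyndon and `ℓ2 ≠ ℓ^r`, then `|ℓ1| > 1` and, writing
the costandard factorization `ℓ1 = u v`, the word `v ℓ2` is Lyndon; thus
`ℓ = u v ℓ2` with `u`, `v`, `uv` and `vℓ2` all Lyndon. -/
theorem three_way_lyndon (ℓ ℓ1 ℓ2 r : List I)
    (hℓ : IsLyndon ℓ) (h1 : IsLyndon ℓ1) (h2 : IsLyndon ℓ2) (hsplit : ℓ = ℓ1 ++ ℓ2)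
    (hr : LongestLyndonSuffix ℓ r) (hne : ℓ2 ≠ r) :
    1 < ℓ1.length ∧
      ∀ u v : List I, ℓ1 = u ++ v → LongestLyndonSuffix ℓ1 v →
        IsLyndon u ∧ IsLyndon v ∧ IsLyndon (u ++ v) ∧ IsLyndon (v ++ ℓ2) :=
  three_way_lyndon_general ℓ ℓ1 ℓ2 r h1 h2 hsplit hr hne
end

section
/- Let ℓ = ℓ1 ℓ2 be a factorization of a Lyndon word ℓ with ℓ1 and ℓ2 both Lyndon. Define u_1 = ℓ1, v_1 = ℓ2, and, as long as |v_i| > 1, set u_{i+1} = u_i v_i^{ls} and v_{i+1} = v_i^{rs} (standard factorizations of v_i). Let n be the smallest index such that either v_n^{ls} ≤ u_n or |v_n| = 1. Then the longest proper Lyndon prefix ℓ^{ls} of ℓ equals u_n. -/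
/- Words over a linearly ordered alphabet `I` are lists, compared by the
lexicographic order of Lean's `LinearOrder (List I)` instance, in which a word
is smaller than any word of which it is a proper prefix. -/

variable {I : Type*} [LinearOrder I]

/-!
Along the sequence, `ℓ = u_i v_i` with both factors Lyndon: before the stopping index
`u_i < v_i^{ls}`, so `u_{i+1} = u_i v_i^{ls}` is Lyndon, and the right factor `v_i^{rs}` of the
standard factorization of a Lyndon word is again Lyndon. At the stopping index, a longer Lyndon
prefix of `ℓ` would be `u_n q` with `q` a nonempty proper prefix of `v_n`, longer than `v_n^{ls}`
because `v_n^{ls} ≤ u_n < q`. So `q` is not Lyndon, and its least proper suffix `t` is a Lyndon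
border of `q`: either `t` is a Lyndon prefix of `v_n` longer than `v_n^{ls}`, or
`t ≤ v_n^{ls} ≤ u_n < u_n q < t`.

That `v^{rs}` is Lyndon is proved for every `v = P w` with `P`, `w` Lyndon and `v^{ls} = P x`, by
induction on `|w|`: if `w = b c` is the standard factorization, then `P < b` (directly when `x` is a
prefix of `b`, by the argument above otherwise), so `P b` is Lyndon and `v = (P b) c` is the same
situation with `c` shorter than `w`; that `c` is Lyndon is itself an instance of the induction
hypothesis, applied to the factorization of `w` at its least proper suffix.
-/

theorem le_of_prefix {p l : List I} (h : p <+: l) : p ≤ l :=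
  not_lt.mp h.le

theorem append_lt_append_left_iff (c : List I) {a b : List I} : c ++ a < c ++ b ↔ a < b :=
  ⟨fun h => not_le.mp fun hba => List.append_left_le (not_lt.mpr hba) h, List.append_left_lt⟩

theorem prefix_or_forall_append_lt_of_lt {a b : List I} (h : a < b) :
    a <+: b ∨ ∀ x y, a ++ x < b ++ y := by
  replace h := List.lex_lt.mpr h
  induction h with
  | nil => exact Or.inl List.nil_prefix
  | rel hxy => exact Or.inr fun _ _ => List.Lex.rel hxy
  | cons _ ih =>
    rcases ih with ⟨t, rfl⟩ | h
    · exact Or.inl ⟨t, rfl⟩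
    · exact Or.inr fun x y => List.Lex.cons (h x y)

theorem prefix_or_forall_append_lt_of_le {a b : List I} (h : a ≤ b) :
    a <+: b ∨ ∀ x y, a ++ x < b ++ y :=
  h.eq_or_lt.elim (fun e => Or.inl (e ▸ List.prefix_rfl)) prefix_or_forall_append_lt_of_lt

namespace IsLyndon

theorem singleton (x : I) : IsLyndon [x] :=
  ⟨List.cons_ne_nil x [], fun i hi hi' => by simp only [List.length_singleton] at hi'; omega⟩

theorem le_drop {w : List I} (hw : IsLyndon w) {i : ℕ} (hi : i < w.length) : w ≤ w.drop i := by
  rcases Nat.eq_zero_or_pos i with rfl | hi0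
  · exact le_rfl
  · exact (hw.2 i hi0 hi).le

theorem append_lt_right {u w : List I} (h : IsLyndon (u ++ w)) (hu : u ≠ []) (hw : w ≠ []) :
    u ++ w < w := by
  simpa using h.2 u.length (List.length_pos_iff.mpr hu) (by simp [List.length_pos_iff.mpr hw])

theorem lt_right {u w : List I} (h : IsLyndon (u ++ w)) (hu : u ≠ []) (hw : w ≠ []) : u < w :=
  (le_of_prefix (List.prefix_append u w)).trans_lt (h.append_lt_right hu hw)

theorem append_s12 {u w : List I} (hu : IsLyndon u) (hw : IsLyndon w) (huw : u < w) :
    IsLyndon (u ++ w) := by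
  have huw_w : u ++ w < w := by
    rcases prefix_or_forall_append_lt_of_le huw.le with ⟨w₂, rfl⟩ | h
    · have hw₂ : w₂ ≠ [] := by rintro rfl; simp at huw
      exact List.append_left_lt (hw.append_lt_right hu.1 hw₂)
    · simpa using h w []
  refine ⟨by simp [hu.1], fun i hi0 hi => ?_⟩
  rcases lt_or_ge i u.length with hiu | hiu
  · rw [List.drop_append_of_le_length hiu.le]
    rcases prefix_or_forall_append_lt_of_le (hu.2 i hi0 hiu).le with h | h
    · have := h.length_le
      simp only [List.length_drop] at this
      omega
    · exact h w w
  · rw [List.drop_append, List.drop_eq_nil_of_le hiu, List.nil_append]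
    exact huw_w.trans_le (hw.le_drop (by simp only [List.length_append] at hi; omega))

theorem prefix_of_drop_le {v q : List I} (hv : IsLyndon v) (hqv : q <+: v) {i : ℕ}
    (hi0 : 0 < i) (hiq : i < q.length) (hle : q.drop i ≤ q) : q.drop i <+: q := by
  obtain ⟨r, rfl⟩ := hqv
  have hv_lt : q ++ r < q.drop i ++ r := by
    simpa [List.drop_append_of_le_length hiq.le] using
      hv.2 i hi0 (by simp only [List.length_append]; omega)
  exact (prefix_or_forall_append_lt_of_le hle).resolve_right fun h => (h r r).not_gt hv_lt

end IsLyndon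

theorem exists_isLyndon_drop_minimal (q : List I) (hq : 2 ≤ q.length) :
    ∃ i, 0 < i ∧ i < q.length ∧ IsLyndon (q.drop i) ∧
      ∀ j, 0 < j → j < q.length → q.drop i ≤ q.drop j := by
  obtain ⟨i, hi, hmin⟩ := (Finset.Ioo 0 q.length).exists_min_image (q.drop ·)
    ⟨1, Finset.mem_Ioo.mpr ⟨one_pos, by omega⟩⟩
  simp only [Finset.mem_Ioo, and_imp] at hi hmin
  have ht_ne : q.drop i ≠ [] := by simp only [ne_eq, List.drop_eq_nil_iff]; omega
  refine ⟨i, hi.1, hi.2, ⟨ht_ne, fun j hj hji => ?_⟩, hmin⟩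
  simp only [List.length_drop] at hji
  rw [List.drop_drop]
  refine (hmin (i + j) (by omega) (by omega)).lt_of_ne fun e => ?_
  have := congrArg List.length e
  simp only [List.length_drop] at this
  omega

theorem exists_longestLyndonPrefix {w : List I} (hw : 2 ≤ w.length) :
    ∃ b, LongestLyndonPrefix w b := by
  classical
  set m := Nat.findGreatest (fun k => IsLyndon (w.take k)) (w.length - 1)
  have h1 : IsLyndon (w.take 1) := by
    cases w with
    | nil => simp at hw
    | cons x _ => simpa using IsLyndon.singleton x
  have hm : IsLyndon (w.take m) :=
    Nat.findGreatest_spec (P := fun k => IsLyndon (w.take k)) (m := 1) (by omega) h1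
  have hm_le : m ≤ w.length - 1 := Nat.findGreatest_le _
  refine ⟨w.take m, List.take_prefix m w, by simp only [List.length_take]; omega, hm,
    fun p hp hplen hpL => ?_⟩
  rw [List.prefix_iff_eq_take] at hp
  have : p.length ≤ m := Nat.le_findGreatest (by omega) (hp ▸ hpL)
  simp only [List.length_take]
  omega

namespace IsLyndon

/-- The factorization at the lexicographically least proper suffix. -/
theorem exists_eq_append {v : List I} (hv : IsLyndon v) (h2 : 2 ≤ v.length) :
    ∃ P r, v = P ++ r ∧ IsLyndon P ∧ IsLyndon r := by
  obtain ⟨i₀, hi₀, hi₀v, hr, hmin⟩ := exists_isLyndon_drop_minimal v h2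
  have hv_eq := (List.take_append_drop i₀ v).symm
  set P := v.take i₀
  set r := v.drop i₀
  have hP : P.length = i₀ := by simp only [P, List.length_take]; omega
  refine ⟨P, r, hv_eq, ⟨List.ne_nil_of_length_pos (by omega), fun i hi0 hiP => ?_⟩, hr⟩
  rw [hv_eq] at hv hmin
  clear_value P r
  by_contra! hle
  set s := P.drop i
  have hv_lt : P ++ r < s ++ r := by
    simpa [s, List.drop_append_of_le_length hiP.le] using
      hv.2 i hi0 (by simp only [List.length_append]; omega)
  rcases prefix_or_forall_append_lt_of_le hle with ⟨t, ht⟩ | h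
  · have hr_le := hmin s.length (by simp only [s, List.length_drop]; omega)
      (by simp only [s, List.length_drop, List.length_append]; omega)
    rw [← ht, List.append_assoc, List.drop_left] at hr_le
    rw [← ht, List.append_assoc, append_lt_append_left_iff] at hv_lt
    exact hv_lt.not_ge hr_le
  · exact (h r r).not_gt hv_lt

end IsLyndon

namespace LongestLyndonPrefix

theorem not_isLyndon_append {v a u q : List I} (ha : LongestLyndonPrefix v a) (hv : IsLyndon v)
    (hau : a ≤ u) (hu : u ≠ []) (hq : q ≠ []) (hqv : q <+: v) (hqlen : q.length < v.length) :
    ¬ IsLyndon (u ++ q) := by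
  intro huq
  obtain ⟨hav, -, haL, hmax⟩ := ha
  have haq : a < q := hau.trans_lt (huq.lt_right hu hq)
  have haq_len : a.length < q.length := by
    by_contra! h
    exact (le_of_prefix (List.prefix_of_prefix_length_le hqv hav h)).not_gt haq
  have haq_prefix : a <+: q := List.prefix_of_prefix_length_le hav hqv haq_len.le
  obtain ⟨i, hi0, hiq, htL, htmin⟩ :=
    exists_isLyndon_drop_minimal q (by have := List.length_pos_iff.mpr haL.1; omega)
  have ht_le : q.drop i ≤ q := by
    by_contra! h
    have hqL : IsLyndon q := ⟨hq, fun j hj hjq => h.trans_le (htmin j hj hjq)⟩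
    exact (hmax q hqv hqlen hqL).not_gt haq_len
  have ht_prefix : q.drop i <+: q := hv.prefix_of_drop_le hqv hi0 hiq ht_le
  rcases le_or_gt (q.drop i).length a.length with hlen | hlen
  · have huq_lt : u ++ q < q.drop i := by
      simpa using huq.2 (u.length + i) (by omega) (by simp only [List.length_append]; omega)
    refine huq_lt.not_ge ?_
    calc q.drop i ≤ a := le_of_prefix (List.prefix_of_prefix_length_le ht_prefix haq_prefix hlen)
      _ ≤ u := hau
      _ ≤ u ++ q := le_of_prefix (List.prefix_append u q)
  · exact (hmax _ (ht_prefix.trans hqv) (by simp only [List.length_drop]; omega) htL).not_gt hlen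

end LongestLyndonPrefix

theorem isLyndon_drop_of_longestLyndonPrefix_append {P w a : List I} (hP : IsLyndon P)
    (hw : IsLyndon w) (ha : LongestLyndonPrefix (P ++ w) a) (hPa : P.length ≤ a.length) :
    IsLyndon ((P ++ w).drop a.length) := by
  induction hn : w.length using Nat.strong_induction_on generalizing P w a with
  | _ n ih =>
  obtain ⟨hav, halen, haL, hmax⟩ := ha
  obtain ⟨x, rfl⟩ := List.prefix_of_prefix_length_le (List.prefix_append P w) hav hPa
  have hxw : x <+: w := (List.prefix_append_right_inj P).mp hav
  by_cases hx : x = []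
  · simpa [hx] using hw
  have hxlen : x.length < w.length := by simpa using halen
  have hw2 : 2 ≤ w.length := by have := List.length_pos_iff.mpr hx; omega
  obtain ⟨b, hb⟩ := exists_longestLyndonPrefix hw2
  have hc : IsLyndon (w.drop b.length) := by
    obtain ⟨P', r', rfl, hP', hr'⟩ := hw.exists_eq_append hw2
    have hr'_len : 0 < r'.length := List.length_pos_iff.mpr hr'.1
    exact ih r'.length (by simp [← hn, List.length_pos_iff.mpr hP'.1]) hP' hr' hb
      (hb.2.2.2 P' (List.prefix_append P' r') (by simp only [List.length_append]; omega) hP') rfl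
  have hPb : P < b := by
    rcases le_or_gt x.length b.length with hxb | hbx
    · calc P ≤ P ++ x := le_of_prefix (List.prefix_append P x)
        _ < x := haL.append_lt_right hP.1 hx
        _ ≤ b := le_of_prefix (List.prefix_of_prefix_length_le hxw hb.1 hxb)
    · exact not_le.mp fun hbP => hb.not_isLyndon_append hw hbP hP.1 hx hxw hxlen haL
  obtain ⟨c, rfl⟩ := hb.1
  rw [List.drop_left] at hc
  have hPb_len : (P ++ b).length ≤ (P ++ x).length :=
    hmax (P ++ b) (by simp) (by simp [List.length_pos_iff.mpr hc.1]) (hP.append_s12 hb.2.2.1 hPb)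
  rw [← List.append_assoc] at hav halen hmax ⊢
  exact ih c.length (by simp [← hn, List.length_pos_iff.mpr hb.2.2.1.1])
    (hP.append_s12 hb.2.2.1 hPb) hc ⟨hav, halen, haL, hmax⟩ hPb_len rfl

theorem LongestLyndonPrefix.isLyndon_drop {v a : List I} (ha : LongestLyndonPrefix v a)
    (hv : IsLyndon v) : IsLyndon (v.drop a.length) := by
  have ha_len : 0 < a.length := List.length_pos_iff.mpr ha.2.2.1.1
  obtain ⟨P, r, rfl, hP, hr⟩ := hv.exists_eq_append (by have := ha.2.1; omega)
  have hr_len : 0 < r.length := List.length_pos_iff.mpr hr.1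
  exact isLyndon_drop_of_longestLyndonPrefix_append hP hr ha
    (ha.2.2.2 P (List.prefix_append P r) (by simp only [List.length_append]; omega) hP)

theorem longestLyndonPrefix_append {u v : List I} (hu : IsLyndon u) (hv : IsLyndon v)
    (hstop : v.length = 1 ∨ ∃ w, LongestLyndonPrefix v w ∧ w ≤ u) :
    LongestLyndonPrefix (u ++ v) u := by
  refine ⟨List.prefix_append u v, by simp [List.length_pos_iff.mpr hv.1], hu,
    fun p hp hplen hpL => ?_⟩
  by_contra! hlt
  obtain ⟨q, rfl⟩ := List.prefix_of_prefix_length_le (List.prefix_append u v) hp hlt.le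
  have hqv : q <+: v := (List.prefix_append_right_inj u).mp hp
  have hq : q ≠ [] := by rintro rfl; simp at hlt
  have hqlen : q.length < v.length := by simpa using hplen
  rcases hstop with hv1 | ⟨w, hw, hwu⟩
  · have := List.length_pos_iff.mpr hq
    omega
  · exact hw.not_isLyndon_append hv hwu hu.1 hq hqv hqlen hpL

theorem standard_prefix_eq_seq_general (ℓ ℓ1 ℓ2 : List I)
    (h1 : IsLyndon ℓ1) (h2 : IsLyndon ℓ2) (hsplit : ℓ = ℓ1 ++ ℓ2)
    (u v : ℕ → List I) (hu1 : u 1 = ℓ1) (hv1 : v 1 = ℓ2)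
    (hstep : ∀ i, 1 ≤ i → 1 < (v i).length →
      ∃ vls vrs : List I, LongestLyndonPrefix (v i) vls ∧ v i = vls ++ vrs ∧
        u (i + 1) = u i ++ vls ∧ v (i + 1) = vrs)
    (n : ℕ) (hn1 : 1 ≤ n)
    (hstop : (v n).length = 1 ∨ ∃ w : List I, LongestLyndonPrefix (v n) w ∧ w ≤ u n)
    (hmin : ∀ m, 1 ≤ m → m < n →
      ¬((v m).length = 1 ∨ ∃ w : List I, LongestLyndonPrefix (v m) w ∧ w ≤ u m)) :
    LongestLyndonPrefix ℓ (u n) := by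
  have hinv : ∀ i, 1 ≤ i → i ≤ n →
      ℓ = u i ++ v i ∧ IsLyndon (u i) ∧ IsLyndon (v i) := by
    intro i hi
    induction i, hi using Nat.le_induction with
    | base => exact fun _ => ⟨by rw [hu1, hv1, hsplit], hu1 ▸ h1, hv1 ▸ h2⟩
    | succ i hi ih =>
      intro hin
      obtain ⟨hℓi, hui, hvi⟩ := ih (by omega)
      obtain ⟨hvi_ne_one, hcont⟩ := not_or.mp (hmin i hi (by omega))
      have hvi_len := List.length_pos_iff.mpr hvi.1
      obtain ⟨vls, vrs, hls, hvi_eq, hu_succ, hv_succ⟩ := hstep i hi (by omega)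
      have hvrs : IsLyndon vrs := by simpa [hvi_eq] using hls.isLyndon_drop hvi
      refine ⟨by rw [hu_succ, hv_succ, hℓi, hvi_eq, List.append_assoc], ?_, hv_succ ▸ hvrs⟩
      exact hu_succ ▸ hui.append_s12 hls.2.2.1 (not_le.mp fun h => hcont ⟨vls, hls, h⟩)
  obtain ⟨hℓn, hun, hvn⟩ := hinv n hn1 le_rfl
  exact hℓn ▸ longestLyndonPrefix_append hun hvn hstop

/-- For a factorization `ℓ = ℓ1 ℓ2` of a Lyndon word into two Lyndon words, iterating
`u_{i+1} = u_i v_i^{ls}`, `v_{i+1} = v_i^{rs}` (standard factorizations) from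
`u_1 = ℓ1`, `v_1 = ℓ2`, with `n` the smallest index such that `v_n^{ls} ≤ u_n` or
`|v_n| = 1`, the longest proper Lyndon prefix `ℓ^{ls}` of `ℓ` equals `u_n`. -/
theorem standard_prefix_eq_seq (ℓ ℓ1 ℓ2 : List I)
    (hℓ : IsLyndon ℓ) (h1 : IsLyndon ℓ1) (h2 : IsLyndon ℓ2) (hsplit : ℓ = ℓ1 ++ ℓ2)
    (u v : ℕ → List I) (hu1 : u 1 = ℓ1) (hv1 : v 1 = ℓ2)
    (hstep : ∀ i, 1 ≤ i → 1 < (v i).length →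
      ∃ vls vrs : List I, LongestLyndonPrefix (v i) vls ∧ v i = vls ++ vrs ∧
        u (i + 1) = u i ++ vls ∧ v (i + 1) = vrs)
    (n : ℕ) (hn1 : 1 ≤ n)
    (hstop : (v n).length = 1 ∨ ∃ w : List I, LongestLyndonPrefix (v n) w ∧ w ≤ u n)
    (hmin : ∀ m, 1 ≤ m → m < n →
      ¬((v m).length = 1 ∨ ∃ w : List I, LongestLyndonPrefix (v m) w ∧ w ≤ u m)) :
    LongestLyndonPrefix ℓ (u n) :=
  standard_prefix_eq_seq_general ℓ ℓ1 ℓ2 h1 h2 hsplit u v hu1 hv1 hstep n hn1 hstop hmin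
end

section
/- Let u be a Lyndon word and write u = v w with v Lyndon and w nonempty. If w = w1 w2 ... wN is the canonical factorization of w (each wi Lyndon, w1 ≥ w2 ≥ ... ≥ wN), then wN > v; hence w1 ≥ w2 ≥ ... ≥ wN > v. -/
/- Words over a linearly ordered alphabet `I` are lists, compared by the
lexicographic order of Lean's `LinearOrder (List I)` instance, in which a word
is smaller than any word of which it is a proper prefix. -/

variable {I : Type*} [LinearOrder I]

theorem my_lt_append (v w : List I) (hw : w ≠ []) : v < v ++ w := by
  show List.Lex (· < ·) v (v ++ w)
  induction v with
  | nil => cases w with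
    | nil => exact absurd rfl hw
    | cons a t => exact List.Lex.nil
  | cons a t ih => exact List.Lex.cons ih

/-- If a Lyndon word `u` splits as `u = v w` with `v` Lyndon and `w` nonempty, and
`w = w1 … wN` is the canonical factorization of `w`, then `wN > v`
(hence `w1 ≥ w2 ≥ … ≥ wN > v`). -/
theorem canonical_factors_gt_left (u v w : List I)
    (hu : IsLyndon u) (hv : IsLyndon v) (hw : w ≠ []) (hsplit : u = v ++ w)
    (fs : List (List I)) (hfac : IsCanonicalFactorization w fs) :
    v < fs.getLast hfac.2.1 := by
  obtain ⟨hflat, hne, hlyn, _⟩ := hfac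
  set L := fs.getLast hne with hL
  have hLmem : L ∈ fs := List.getLast_mem hne
  have hLlyn := hlyn L hLmem
  have hLne : L ≠ [] := hLlyn.1
  -- L is a suffix of w
  have hfs : fs.dropLast ++ [L] = fs := List.dropLast_append_getLast hne
  have hLsuf : L <:+ w := by
    refine ⟨fs.dropLast.flatten, ?_⟩
    rw [hflat, ← hfs]
    simp
  have hLsufu : L <:+ u := hLsuf.trans ⟨v, hsplit.symm⟩
  obtain ⟨t, ht⟩ := hLsufu
  have hlen : u.length = t.length + L.length := by rw [← ht]; simp
  have hLw : L.length ≤ w.length := hLsuf.length_le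
  have hvpos : 0 < v.length := List.length_pos_iff.mpr hv.1
  have htpos : 0 < t.length := by
    have : u.length = v.length + w.length := by rw [hsplit]; simp
    omega
  have hti : t.length < u.length := by
    have : 0 < L.length := List.length_pos_iff.mpr hLne
    omega
  have hdrop : u.drop t.length = L := by rw [← ht, List.drop_left]
  have h1 : u < L := by
    have := hu.2 t.length htpos hti
    rwa [hdrop] at this
  have h2 : v < u := by rw [hsplit]; exact my_lt_append v w hw
  exact h2.trans h1
end

section
/- Let w be a nonempty word with canonical factorization w = w1 w2 ... wn (each wi Lyndon, w1 ≥ w2 ≥ ... ≥ wn). If some cyclic permutation of w is a Lyndon word, then that cyclic permutation must be of the form w_i w_{i+1} ... w_n w_1 ... w_{i-1} for some index i in {1, 2, ..., n}; that is, a Lyndon cyclic permutation never splits one of the canonical factors. -/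
/- Words over a linearly ordered alphabet `I` are lists, compared by the
lexicographic order of Lean's `LinearOrder (List I)` instance, in which a word
is smaller than any word of which it is a proper prefix. -/

variable {I : Type*} [LinearOrder I]

private lemma lt_append_of_ne_nil {p t : List I} (h : t ≠ []) : p < p ++ t := by
  induction p with
  | nil => cases t with
    | nil => exact absurd rfl h
    | cons x xs => exact List.Lex.nil
  | cons x xs ih => exact List.Lex.cons ih

omit [LinearOrder I] in
private lemma split_flatten (fs : List (List I)) :
    ∀ a b : List I, fs.flatten = a ++ b →
    (∃ j, a = (fs.take j).flatten ∧ b = (fs.drop j).flatten) ∨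
    (∃ u v, (u ++ v) ∈ fs ∧ u ≠ [] ∧ v ≠ [] ∧
      ∃ s t : List I, a = s ++ u ∧ b = v ++ t) := by
  induction fs with
  | nil =>
    intro a b h
    simp only [List.flatten_nil] at h
    obtain ⟨ha, hb⟩ := List.append_eq_nil_iff.mp h.symm
    exact Or.inl ⟨0, by simp [ha, hb]⟩
  | cons f fs ih =>
    intro a b h
    simp only [List.flatten_cons] at h
    rcases List.append_eq_append_iff.mp h.symm with ⟨a', hf, hb⟩ | ⟨c', ha, hfl⟩
    · rcases eq_or_ne a [] with rfl | hane
      · exact Or.inl ⟨0, by simpa using h.symm⟩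
      · rcases eq_or_ne a' [] with rfl | ha'ne
        · refine Or.inl ⟨1, ?_, ?_⟩ <;> simp_all
        · exact Or.inr ⟨a, a', by simp [hf.symm], hane, ha'ne, [], fs.flatten, by simp, hb⟩
    · rcases ih c' b hfl with ⟨j, hc, hb⟩ | ⟨u, v, hmem, hu, hv, s, t, hc, hb⟩
      · exact Or.inl ⟨j + 1, by simp [ha, hc], by simpa using hb⟩
      · exact Or.inr ⟨u, v, List.mem_cons_of_mem _ hmem, hu, hv, f ++ s, t,
          by simp [ha, hc], hb⟩

/-- If some cyclic permutation `ℓ` of a word `w` with canonical factorization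
`w = w1 … wn` is Lyndon, then `ℓ = w_i … w_n w_1 … w_{i-1}` for some `i`: a Lyndon
cyclic permutation never splits one of the canonical factors. -/
theorem lyndon_cyclic_perm_form (w ℓ : List I) (fs : List (List I))
    (hfac : IsCanonicalFactorization w fs) (hℓ : IsLyndon ℓ)
    (hcyc : ∃ a b : List I, w = a ++ b ∧ ℓ = b ++ a) :
    ∃ j, j < fs.length ∧ ℓ = (fs.drop j).flatten ++ (fs.take j).flatten := by
  obtain ⟨a, b, hw, hℓab⟩ := hcyc
  obtain ⟨hwf, hfsne, hlyn, _⟩ := hfac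
  rcases split_flatten fs a b ((hwf ▸ hw).symm : a ++ b = fs.flatten).symm with ⟨j, hca, hcb⟩ |
      ⟨u, v, hmem, hu, hv, s, t, ha, hb⟩
  · by_cases hj : j < fs.length
    · exact ⟨j, hj, by rw [hℓab, hca, hcb]⟩
    · refine ⟨0, List.length_pos_iff.mpr hfsne, ?_⟩
      rw [List.take_of_length_le (le_of_not_gt hj)] at hca
      rw [List.drop_of_length_le (le_of_not_gt hj)] at hcb
      simp [hℓab, hca, hcb]
  · exfalso
    -- ℓ = (v ++ (t ++ s)) ++ u
    have hℓform : ℓ = (v ++ (t ++ s)) ++ u := by simp [hℓab, ha, hb]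
    have hfLyn := hlyn _ hmem
    -- f < v
    have hfv : (u ++ v : List I) < v := by
      have := hfLyn.2 u.length (List.length_pos_iff.mpr hu)
        (by simpa using List.length_pos_iff.mpr hv)
      simpa [List.drop_left] using this
    -- ℓ < u
    have hℓu : ℓ < u := by
      have h1 : 0 < (v ++ (t ++ s)).length := by
        simp only [List.length_append]
        have := List.length_pos_iff.mpr hv
        omega
      have h2 : (v ++ (t ++ s)).length < ℓ.length := by
        rw [hℓform]
        simp only [List.length_append]
        have := List.length_pos_iff.mpr hu
        omega
      have := hℓ.2 (v ++ (t ++ s)).length h1 h2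
      rw [hℓform] at this ⊢
      rwa [List.drop_left] at this
    rcases lt_trichotomy u v with huv | huv | huv
    · -- u < v ⇒ u < ℓ, contradiction with ℓ < u
      have : u < ℓ := by
        rw [hℓform, List.append_assoc]
        exact List.Lex.append_right _ _ huv
      exact lt_asymm this hℓu
    · -- u = v ⇒ u proper prefix of ℓ
      subst huv
      have : u < ℓ := by
        rw [hℓform, List.append_assoc]
        exact lt_append_of_ne_nil (by
          simp only [ne_eq, List.append_eq_nil_iff, not_and]
          intro _; exact hu)
      exact lt_asymm this hℓu
    · -- v < u ⇒ v < u ++ v, contradiction with u ++ v < v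
      exact lt_asymm (List.Lex.append_right _ v huv) hfv
end

section
/- Let w be a nonempty word with canonical factorization w = w1 w2 ... wn (each wi Lyndon, w1 ≥ w2 ≥ ... ≥ wn). If ℓ is a Lyndon word that is a cyclic permutation of w, then there exists an index i in {1, 2, ..., n} such that for every positive integer k, the k-fold concatenation w^k equals w1 w2 ... w_{i-1} ℓ^{k-1} w_i w_{i+1} ... w_n, where ℓ^{k-1} denotes ℓ concatenated with itself k−1 times. -/
/- Words over a linearly ordered alphabet `I` are lists, compared by the
lexicographic order of Lean's `LinearOrder (List I)` instance, in which a word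
is smaller than any word of which it is a proper prefix. -/

variable {I : Type*} [LinearOrder I]

/-! A Lyndon conjugate `ℓ = b a` of `w = a b` cannot cut the canonical factorization of `w`
strictly inside a factor: if the cut splits a Lyndon factor `u v` (with `u`, `v` nonempty),
then `ℓ = v x u` for some `x`, and
`ℓ < u ≤ u v < v ≤ ℓ`,
using in turn that `ℓ` is Lyndon, that `u` is a prefix of `u v`, that `u v` is Lyndon, and
that `v` is a prefix of `ℓ`. Hence `a = w₁ ⋯ w_{j}` and `b = w_{j+1} ⋯ w_n`, and
`(a b)^k = a (b a)^{k-1} b` gives the formula. -/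

namespace List

theorem lt_append_of_ne_nil_s17 {α : Type*} [LinearOrder α] (x : List α) {y : List α}
    (hy : y ≠ []) : x < x ++ y := by
  obtain ⟨c, cs, rfl⟩ := exists_cons_of_ne_nil hy
  simpa using append_left_lt (l₁ := x) (nil_lt_cons c cs)

theorem exists_of_flatten_eq_append {α : Type*} {fs : List (List α)} {a b : List α}
    (h : fs.flatten = a ++ b) :
    (∃ as bs, fs = as ++ bs ∧ a = as.flatten ∧ b = bs.flatten) ∨
      ∃ as u v ds, fs = as ++ (u ++ v) :: ds ∧ u ≠ [] ∧ v ≠ [] ∧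
        a = as.flatten ++ u ∧ b = v ++ ds.flatten := by
  rcases flatten_eq_append_iff.mp h with h | ⟨as, u, c, cs, ds, rfl, rfl, rfl⟩
  · exact Or.inl h
  · rcases eq_or_ne u [] with rfl | hu
    · exact Or.inl ⟨as, (c :: cs) :: ds, by simp, by simp, by simp⟩
    · exact Or.inr ⟨as, u, c :: cs, ds, rfl, hu, cons_ne_nil c cs, rfl, rfl⟩

theorem flatten_replicate_succ_append {α : Type*} (a b : List α) (k : ℕ) :
    (replicate (k + 1) (a ++ b)).flatten = a ++ (replicate k (b ++ a)).flatten ++ b := by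
  induction k with
  | zero => simp
  | succ k ih => rw [replicate_succ, flatten_cons, ih, replicate_succ, flatten_cons]; simp

end List

namespace IsLyndon

theorem append_lt_right_s17 {x y : List I} (h : IsLyndon (x ++ y)) (hx : x ≠ []) (hy : y ≠ []) :
    x ++ y < y := by
  simpa using h.2 x.length (List.length_pos_iff.2 hx) (by simp [List.length_pos_iff.2 hy])

theorem not_isLyndon_wrap {u v : List I} (h : IsLyndon (u ++ v)) (hu : u ≠ [])
    (hv : v ≠ []) (x : List I) : ¬ IsLyndon (v ++ x ++ u) := by
  intro hℓ
  have hℓu : v ++ x ++ u < u := hℓ.append_lt_right_s17 (by simp [hv]) hu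
  have huv : u ++ v < v := h.append_lt_right_s17 hu hv
  have hvℓ : v ≤ v ++ x ++ u := by
    rw [List.append_assoc]; exact (v.lt_append_of_ne_nil_s17 (by simp [hu])).le
  exact lt_irrefl v (hvℓ.trans_lt (hℓu.trans ((u.lt_append_of_ne_nil_s17 hv).trans huv)))

end IsLyndon

theorem exists_rotate_eq_of_isLyndon {fs : List (List I)}
    (hly : ∀ f ∈ fs, IsLyndon f) (hne : fs ≠ []) {a b : List I} (h : fs.flatten = a ++ b)
    (hℓ : IsLyndon (b ++ a)) :
    ∃ j < fs.length, b ++ a = (fs.drop j).flatten ++ (fs.take j).flatten := by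
  rcases List.exists_of_flatten_eq_append h with
    ⟨as, bs, rfl, rfl, rfl⟩ | ⟨as, u, v, ds, rfl, hu, hv, rfl, rfl⟩
  · rcases eq_or_ne bs [] with rfl | hbs
    · exact ⟨0, List.length_pos_iff.2 hne, by simp⟩
    · exact ⟨as.length, by simpa using List.length_pos_iff.2 hbs, by simp⟩
  · refine absurd hℓ ?_
    simpa only [List.append_assoc] using
      (hly _ (by simp)).not_isLyndon_wrap hu hv (ds.flatten ++ as.flatten)

/-- If `ℓ` is a Lyndon cyclic permutation of a word `w` with canonical factorization
`w = w1 … wn`, then there is an index such that for every `k ≥ 1`,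
`w^k = w1 … w_{i-1} ℓ^{k-1} w_i … w_n`. -/
theorem lyndon_cyclic_perm_power (w ℓ : List I) (fs : List (List I))
    (hfac : IsCanonicalFactorization w fs) (hℓ : IsLyndon ℓ)
    (hcyc : ∃ a b : List I, w = a ++ b ∧ ℓ = b ++ a) :
    ∃ j, j < fs.length ∧ ∀ k : ℕ, 0 < k →
      (List.replicate k w).flatten =
        (fs.take j).flatten ++ (List.replicate (k - 1) ℓ).flatten
          ++ (fs.drop j).flatten := by
  obtain ⟨rfl, hne, hly, -⟩ := hfac
  obtain ⟨a, b, hw, rfl⟩ := hcyc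
  obtain ⟨j, hj, hba⟩ := exists_rotate_eq_of_isLyndon hly hne hw hℓ
  refine ⟨j, hj, fun k hk => ?_⟩
  obtain ⟨k, rfl⟩ := Nat.exists_eq_add_of_lt hk
  rw [hba, ← List.take_append_drop j fs, List.flatten_append]
  simpa using List.flatten_replicate_succ_append (fs.take j).flatten (fs.drop j).flatten k
end

section
/- Let w be a Lyndon word, let z be a Lyndon word of length > 1 with standard factorization z = u v (so u = z^{ls} is the longest proper Lyndon prefix of z and v = z^{rs}), and assume |w| < |z|. Then w > u if and only if w > z. -/
/- Words over a linearly ordered alphabet `I` are lists, compared by the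
lexicographic order of Lean's `LinearOrder (List I)` instance, in which a word
is smaller than any word of which it is a proper prefix. -/

variable {I : Type*} [LinearOrder I]

private lemma list_lt_of_prefix {l₁ l₂ : List I} (h : l₁ <+: l₂) (hl : l₁.length < l₂.length) :
    l₁ < l₂ := by
  obtain ⟨t, rfl⟩ := h
  have ht : t ≠ [] := by rintro rfl; simp at hl
  clear hl
  show List.Lex (· < ·) l₁ (l₁ ++ t)
  induction l₁ with
  | nil => cases t with
    | nil => exact absurd rfl ht
    | cons a t => exact List.Lex.nil
  | cons a l ih => exact List.Lex.cons ih

private lemma list_lt_of_take_eq : ∀ (k : ℕ) {l₁ l₂ : List I} (h₁ : k < l₁.length)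
    (h₂ : k < l₂.length), l₁.take k = l₂.take k → l₁[k] < l₂[k] → l₁ < l₂ := by
  intro k
  induction k with
  | zero =>
    rintro (_ | ⟨a, l₁⟩) (_ | ⟨b, l₂⟩) h₁ h₂ ht hg <;> simp at h₁ h₂
    exact show List.Lex (· < ·) _ _ from List.Lex.rel (by simpa using hg)
  | succ k ih =>
    rintro (_ | ⟨a, l₁⟩) (_ | ⟨b, l₂⟩) h₁ h₂ ht hg
    · simp at h₁
    · simp at h₁
    · simp at h₂
    · simp only [List.take_succ_cons, List.cons.injEq] at ht
      obtain ⟨rfl, ht⟩ := ht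
      exact show List.Lex (· < ·) _ _ from
        List.Lex.cons (ih (by simpa using h₁) (by simpa using h₂) ht (by simpa using hg))

private lemma list_lt_cases : ∀ {l₁ l₂ : List I}, l₁ < l₂ →
    l₁ <+: l₂ ∨ ∃ k, ∃ (h₁ : k < l₁.length) (h₂ : k < l₂.length),
      l₁.take k = l₂.take k ∧ l₁[k] < l₂[k] := by
  intro l₁ l₂ h
  replace h : List.Lex (· < ·) l₁ l₂ := h
  induction h with
  | nil => exact Or.inl (List.nil_prefix)
  | @rel a l₁ b l₂ h =>
    exact Or.inr ⟨0, Nat.succ_pos _, Nat.succ_pos _, rfl, by simpa using h⟩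
  | @cons a l₁ l₂ h ih =>
    rcases ih with hp | ⟨k, h₁, h₂, ht, hg⟩
    · exact Or.inl (List.cons_prefix_cons.mpr ⟨rfl, hp⟩)
    · exact Or.inr ⟨k + 1, by simpa using h₁, by simpa using h₂,
        by simp [List.take_succ_cons, ht], by simpa using hg⟩

private lemma lex_snoc_of_lex {a b : I} (hab : a < b) :
    ∀ (y : List I) {x : List I} (t : List I), x ++ a :: t < y ++ a :: t →
      y.length < x.length → x ++ [b] < y ++ [b] := by
  intro y
  induction y with
  | nil =>
    rintro (_ | ⟨c, x⟩) t h hl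
    · simp at hl
    · replace h : List.Lex (· < ·) (c :: (x ++ a :: t)) (a :: t) := h
      show List.Lex (· < ·) (c :: (x ++ [b])) (b :: [])
      cases h with
      | cons h => exact List.Lex.rel hab
      | rel h => exact List.Lex.rel (h.trans hab)
  | cons d y ih =>
    rintro (_ | ⟨c, x⟩) t h hl
    · simp at hl
    · replace h : List.Lex (· < ·) (c :: (x ++ a :: t)) (d :: (y ++ a :: t)) := h
      show List.Lex (· < ·) (c :: (x ++ [b])) (d :: (y ++ [b]))
      cases h with
      | cons h => exact List.Lex.cons (ih t h (by simpa using hl))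
      | rel h => exact List.Lex.rel h

private lemma lyndon_take_ext {w : List I} (hw : IsLyndon w) {k : ℕ} (hk : k < w.length)
    {b : I} (hb : w[k] < b) : IsLyndon (w.take k ++ [b]) := by
  have hlk : (w.take k).length = k := by simp [Nat.min_eq_left hk.le]
  refine ⟨by simp, fun i hi hlen => ?_⟩
  have hik : i ≤ k := by
    simp only [List.length_append, hlk, List.length_cons, List.length_nil] at hlen
    omega
  have hiw : i < w.length := lt_of_le_of_lt hik hk
  have hdrop : (w.take k ++ [b]).drop i = (w.take k).drop i ++ [b] :=
    List.drop_append_of_le_length (by omega)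
  rw [hdrop]
  have key : w.take k ++ w.drop k < (w.take k).drop i ++ w.drop k := by
    have hdw : List.drop i w = (w.take k).drop i ++ w.drop k := by
      conv_lhs => rw [← List.take_append_drop k w]
      exact List.drop_append_of_le_length (by omega)
    rw [List.take_append_drop, ← hdw]
    exact hw.2 i hi hiw
  rw [List.drop_eq_getElem_cons hk] at key
  exact lex_snoc_of_lex hb _ _ key (by simp [hlk]; omega)

/-- Let `w` be Lyndon and `z = u v` the standard factorization of a Lyndon word `z`
with `|w| < |z|`. Then `w > u` if and only if `w > z`. -/
theorem gt_left_iff_gt (w z u v : List I)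
    (hw : IsLyndon w) (hz : IsLyndon z) (hzlen : 1 < z.length)
    (hsplit : z = u ++ v) (hu : LongestLyndonPrefix z u)
    (hwz : w.length < z.length) :
    u < w ↔ z < w := by
  obtain ⟨hupz, hulen, huL, humax⟩ := hu
  constructor
  · intro huw
    rcases lt_trichotomy w z with hlt | rfl | hgt
    · exfalso
      rcases list_lt_cases hlt with hp | ⟨k, h₁, h₂, ht, hg⟩
      · -- w is a proper prefix of z
        have hwu : w.length ≤ u.length := humax w hp hwz hw
        rcases list_lt_cases huw with hp' | ⟨j, h₁', h₂', ht', hg'⟩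
        · have : u.length < w.length :=
            lt_of_le_of_ne hp'.length_le
              (fun h => (ne_of_lt huw) (hp'.eq_of_length h))
          omega
        · have e1 : u[j] = z[j]'(lt_of_lt_of_le h₁' (le_trans (le_of_lt hulen) le_rfl)) :=
            hupz.getElem h₁'
          have e2 : w[j] = z[j]'(lt_of_lt_of_le h₂' (le_of_lt hwz)) := hp.getElem h₂'
          rw [e1, e2] at hg'
          exact lt_irrefl _ hg'
      · -- first difference at index k with w[k] < z[k]
        have hLyn : IsLyndon (w.take k ++ [z[k]]) := lyndon_take_ext hw h₁ hg
        have heq : z.take (k + 1) = w.take k ++ [z[k]] := by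
          rw [List.take_succ, List.getElem?_eq_getElem h₂, ht]
          rfl
        have hlen : (z.take (k + 1)).length < z.length := by
          rw [List.length_take]
          omega
        have hmax := humax _ (List.take_prefix _ _) hlen (heq ▸ hLyn)
        have hku : k < u.length := by
          rw [List.length_take] at hmax
          omega
        have htu : w.take k = u.take k := by
          rw [ht, List.prefix_iff_eq_take.mp hupz, List.take_take,
            Nat.min_eq_left hku.le]
        have hgu : w[k] < u[k] := by
          rw [hupz.getElem hku]; exact hg
        exact absurd huw (asymm (list_lt_of_take_eq k h₁ hku htu hgu))
    · omega
    · exact hgt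
  · intro hzw
    exact lt_trans (list_lt_of_prefix hupz hulen) hzw
end
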